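/- The out-invariant is 2-Lipschitz: for finite networks X and Y, the Hausdorff distance in ℝ between out(X) = {max_{x'∈X}|ωX(x,x')| : x∈X} and out(Y) = {max_{y'∈Y}|ωY(y,y')| : y∈Y} is at most 2 dN(X,Y). Moreover the local version holds: 2 dN(X,Y) ≥ inf over correspondences R of sup_{(x,y)∈R} |outX(x) − outY(y)|, where outX(x) = max_{x'∈X}|ωX(x,x')|. -/

import Mathlib

open scoped ENNReal
open Function

/-- A correspondence between `X` and `Y`: a relation with full projections. -/
def IsCorrespondence {X Y : Type*} (R : Set (X × Y)) : Prop :=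
  (∀ x : X, ∃ y : Y, (x, y) ∈ R) ∧ (∀ y : Y, ∃ x : X, (x, y) ∈ R)

/-- Distortion of a relation between two networks. -/
noncomputable def dis {X Y : Type*} (ωX : X → X → ℝ) (ωY : Y → Y → ℝ)
    (R : Set (X × Y)) : ℝ≥0∞ :=
  ⨆ p ∈ R, ⨆ q ∈ R, (‖ωX p.1 q.1 - ωY p.2 q.2‖₊ : ℝ≥0∞)

/-- The network distance. -/
noncomputable def dN {X Y : Type*} (ωX : X → X → ℝ) (ωY : Y → Y → ℝ) : ℝ≥0∞ :=
  (1/2) * ⨅ R ∈ {R : Set (X × Y) | IsCorrespondence R}, dis ωX ωY R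

/-- The out-map of a finite network. -/
noncomputable def outMap {X : Type*} [Fintype X] (ωX : X → X → ℝ) (x : X) : ℝ :=
  ⨆ x' : X, |ωX x x'|

/-!
A correspondence `R` with distortion `d` matches every `x'` with some `y'` such that
`|ωX x x' - ωY y y'| ≤ d` whenever `(x, y) ∈ R`, so the row maxima `outMap ωX x` and
`outMap ωY y` differ by at most `d`. As `R` has full projections, the two `out` sets are then
within Hausdorff distance `d`; taking the infimum over `R` gives `2 dN`.
-/

section

variable {X Y : Type*}

lemma IsCorrespondence.hausdorffEDist_range_le {α : Type*} [PseudoEMetricSpace α]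
    {R : Set (X × Y)} (hR : IsCorrespondence R) (f : X → α) (g : Y → α) :
    Metric.hausdorffEDist (Set.range f) (Set.range g) ≤ ⨆ p ∈ R, edist (f p.1) (g p.2) := by
  refine Metric.hausdorffEDist_le_of_mem_edist ?_ ?_
  · rintro _ ⟨x, rfl⟩
    obtain ⟨y, hxy⟩ := hR.1 x
    exact ⟨g y, Set.mem_range_self y, le_iSup₂ (f := fun p (_ : p ∈ R) => edist (f p.1) (g p.2))
      (x, y) hxy⟩
  · rintro _ ⟨y, rfl⟩
    obtain ⟨x, hxy⟩ := hR.2 y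
    exact ⟨f x, Set.mem_range_self x, edist_comm (g y) (f x) ▸
      le_iSup₂ (f := fun p (_ : p ∈ R) => edist (f p.1) (g p.2)) (x, y) hxy⟩

lemma ciSup_le_ciSup_add_of_forall_exists [Nonempty X] [Finite Y] {f : X → ℝ} {g : Y → ℝ}
    {c : ℝ} (h : ∀ x, ∃ y, f x ≤ g y + c) : ⨆ x, f x ≤ (⨆ y, g y) + c :=
  ciSup_le fun x => (h x).elim fun y hy =>
    hy.trans (add_le_add_left (le_ciSup (Set.finite_range g).bddAbove y) c)

lemma IsCorrespondence.abs_ciSup_sub_ciSup_le [Finite X] [Finite Y] [Nonempty X] [Nonempty Y]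
    {R : Set (X × Y)} (hR : IsCorrespondence R) {f : X → ℝ} {g : Y → ℝ} {c : ℝ}
    (h : ∀ p ∈ R, |f p.1 - g p.2| ≤ c) : |(⨆ x, f x) - ⨆ y, g y| ≤ c := by
  rw [abs_sub_le_iff, sub_le_iff_le_add', sub_le_iff_le_add']
  constructor
  · refine ciSup_le_ciSup_add_of_forall_exists fun x => ?_
    obtain ⟨y, hxy⟩ := hR.1 x
    exact ⟨y, by linarith [(abs_sub_le_iff.mp (h _ hxy)).1]⟩
  · refine ciSup_le_ciSup_add_of_forall_exists fun y => ?_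
    obtain ⟨x, hxy⟩ := hR.2 y
    exact ⟨x, by linarith [(abs_sub_le_iff.mp (h _ hxy)).2]⟩

lemma abs_sub_le_toReal_dis {ωX : X → X → ℝ} {ωY : Y → Y → ℝ} {R : Set (X × Y)}
    (hdis : dis ωX ωY R ≠ ∞) {p q : X × Y} (hp : p ∈ R) (hq : q ∈ R) :
    |ωX p.1 q.1 - ωY p.2 q.2| ≤ (dis ωX ωY R).toReal := by
  have hle : (‖ωX p.1 q.1 - ωY p.2 q.2‖₊ : ℝ≥0∞) ≤ dis ωX ωY R :=
    (le_iSup₂ (f := fun q (_ : q ∈ R) => (‖ωX p.1 q.1 - ωY p.2 q.2‖₊ : ℝ≥0∞)) q hq).trans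
      (le_iSup₂ (f := fun p (_ : p ∈ R) =>
        ⨆ q ∈ R, (‖ωX p.1 q.1 - ωY p.2 q.2‖₊ : ℝ≥0∞)) p hp)
  simpa [Real.norm_eq_abs] using ENNReal.toReal_mono hdis hle

lemma IsCorrespondence.edist_outMap_le_dis [Fintype X] [Fintype Y] [Nonempty X] [Nonempty Y]
    {ωX : X → X → ℝ} {ωY : Y → Y → ℝ} {R : Set (X × Y)} (hR : IsCorrespondence R)
    {p : X × Y} (hp : p ∈ R) :
    edist (outMap ωX p.1) (outMap ωY p.2) ≤ dis ωX ωY R := by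
  rcases eq_or_ne (dis ωX ωY R) ∞ with htop | hdis
  · simp [htop]
  rw [edist_dist, Real.dist_eq, outMap, outMap]
  refine ENNReal.ofReal_le_of_le_toReal (hR.abs_ciSup_sub_ciSup_le fun q hq => ?_)
  exact (abs_abs_sub_abs_le_abs_sub _ _).trans (abs_sub_le_toReal_dis hdis hp hq)

lemma two_mul_dN (ωX : X → X → ℝ) (ωY : Y → Y → ℝ) :
    2 * dN ωX ωY = ⨅ R ∈ {R : Set (X × Y) | IsCorrespondence R}, dis ωX ωY R := by
  rw [dN, ← mul_assoc, one_div, ENNReal.mul_inv_cancel two_ne_zero ENNReal.ofNat_ne_top, one_mul]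

end

theorem out_lipschitz {X Y : Type*} [Fintype X] [Fintype Y]
    [Nonempty X] [Nonempty Y] (ωX : X → X → ℝ) (ωY : Y → Y → ℝ) :
    EMetric.hausdorffEdist (Set.range (outMap ωX)) (Set.range (outMap ωY))
        ≤ 2 * dN ωX ωY ∧
    (⨅ R ∈ {R : Set (X × Y) | IsCorrespondence R},
        ⨆ p ∈ R, edist (outMap ωX p.1) (outMap ωY p.2)) ≤ 2 * dN ωX ωY := by
  have hlocal : ∀ R ∈ {R : Set (X × Y) | IsCorrespondence R},
      ⨆ p ∈ R, edist (outMap ωX p.1) (outMap ωY p.2) ≤ dis ωX ωY R :=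
    fun R hR => iSup₂_le fun _ hp => IsCorrespondence.edist_outMap_le_dis hR hp
  rw [two_mul_dN]
  exact ⟨le_iInf₂ fun R hR =>
      (IsCorrespondence.hausdorffEDist_range_le hR _ _).trans (hlocal R hR),
    iInf₂_mono hlocal⟩
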